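/- The function v₁ is an actual solution at infinity: Let q ∈ ℂ with 0 < |q| < 1 and let a₁, a₂, b₁ ∈ ℂ* with qa₁/a₂ ∉ {q^{−m} : m ≥ 0}. Define v₁(x) = (θ_q(a₁x)/θ_q(x)) · ∑_{n≥0} (qa₁/b₁;q)_n (b₁/(a₁a₂x))^n / ((qa₁/a₂;q)_n (q;q)_n). Then for every x ∈ ℂ with |x| > |b₁/(a₁a₂q²)| and x ∉ −q^ℤ: (b₁/q² − a₁a₂x)·v₁(q²x) − (1/q − (a₁+a₂)x)·v₁(qx) − x·v₁(x) = 0. -/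

import Mathlib

open scoped BigOperators

/-- The finite q-Pochhammer symbol `(a;q)_n` for `n : ℕ`. -/
noncomputable def qPochN (q a : ℂ) (n : ℕ) : ℂ :=
  ∏ k ∈ Finset.range n, (1 - a * q ^ k)

/-- The infinite q-Pochhammer symbol `(a;q)_∞`. -/
noncomputable def qPochInf (q a : ℂ) : ℂ :=
  ∏' k : ℕ, (1 - a * q ^ k)

/-- The bilateral q-Pochhammer symbol `(a;q)_n` for `n : ℤ`. -/
noncomputable def qPochZ (q a : ℂ) (n : ℤ) : ℂ :=
  if 0 ≤ n then ∏ k ∈ Finset.range n.toNat, (1 - a * q ^ k)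
  else (∏ k ∈ Finset.range (-n).toNat, (1 - a * q ^ (-((k : ℤ) + 1))))⁻¹

/-- The Jacobi theta function `θ_q(x) = ∑_{n ∈ ℤ} q^{n(n-1)/2} x^n`. -/
noncomputable def theta (q x : ℂ) : ℂ :=
  ∑' n : ℤ, q ^ (n * (n - 1) / 2) * x ^ n


/-- The unilateral solution around infinity. -/
noncomputable def vSol (q a₁ a₂ b₁ x : ℂ) : ℂ :=
  (theta q (a₁ * x) / theta q x) *
    ∑' n : ℕ, qPochN q (q * a₁ / b₁) n * (b₁ / (a₁ * a₂ * x)) ^ n /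
      (qPochN q (q * a₁ / a₂) n * qPochN q q n)

/-! When `x ↦ q x`, the theta quotient `θ_q(a₁x)/θ_q(x)` is divided by `a₁`. Factoring it out, the
equation for `v₁` becomes the second-order q-difference equation of the series
`₂φ₁(q a₁/b₁, 0; q a₁/a₂; q, u)` at `u = b₁/(a₁a₂q²x)`, where `|u| < 1`. Comparing coefficients of
`u ^ n`, that equation reduces to the first-order recurrence satisfied by the coefficients. -/

open Filter Topology

theorem summable_of_succ_eq_smul {𝕜 E : Type*} [NormedField 𝕜] [NormedAddCommGroup E]
    [NormedSpace 𝕜 E] [CompleteSpace E] {f : ℕ → E} {w : ℕ → 𝕜} {r : 𝕜}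
    (hf : ∀ n, f (n + 1) = w n • f n) (hw : Tendsto w atTop (𝓝 r)) (hr : ‖r‖ < 1) :
    Summable f := by
  obtain ⟨ρ, hrρ, hρ⟩ := exists_between hr
  refine summable_of_ratio_norm_eventually_le hρ ?_
  filter_upwards [hw.norm.eventually_lt_const hrρ] with n hn
  rw [hf, norm_smul]
  exact mul_le_mul_of_nonneg_right hn.le (norm_nonneg _)

lemma mul_pred_div_two_add_self (n : ℤ) : n * (n - 1) / 2 + n = (n + 1) * (n + 1 - 1) / 2 := by
  obtain ⟨k, hk⟩ : Even (n * (n - 1)) := Int.even_mul_pred_self n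
  rw [show (n + 1) * (n + 1 - 1) = n * (n - 1) + 2 * n by ring, hk]
  omega

theorem theta_q_mul {q x : ℂ} (hq : q ≠ 0) (hx : x ≠ 0) :
    theta q (q * x) = theta q x / x := by
  rw [eq_div_iff hx, theta, theta, ← tsum_mul_right,
    ← (Equiv.addRight (1 : ℤ)).tsum_eq (fun n ↦ q ^ (n * (n - 1) / 2) * x ^ n)]
  congr 1 with n
  rw [Equiv.coe_addRight, mul_zpow, zpow_add₀ hx, zpow_one, ← mul_pred_div_two_add_self,
    zpow_add₀ hq]
  ring

theorem theta_ratio_q_mul {q a y : ℂ} (hq : q ≠ 0) (ha : a ≠ 0) (hy : y ≠ 0) :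
    theta q (a * (q * y)) / theta q (q * y) = theta q (a * y) / theta q y / a := by
  rw [mul_left_comm, theta_q_mul hq (mul_ne_zero ha hy), theta_q_mul hq hy, div_div_div_eq,
    show a * y * theta q y = theta q y * a * y by ring, mul_div_mul_right _ _ hy, div_div]

lemma qPochN_succ (q a : ℂ) (n : ℕ) :
    qPochN q a (n + 1) = qPochN q a n * (1 - a * q ^ n) :=
  Finset.prod_range_succ _ n

/-- `hypergeom q α β u` is the basic hypergeometric series `₂φ₁(α, 0; β; q, u)`. -/
noncomputable def hypergeomCoeff (q α β : ℂ) (n : ℕ) : ℂ :=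
  qPochN q α n / (qPochN q β n * qPochN q q n)

noncomputable def hypergeom (q α β u : ℂ) : ℂ :=
  ∑' n : ℕ, hypergeomCoeff q α β n * u ^ n

lemma hypergeomCoeff_succ (q α β : ℂ) (n : ℕ) :
    hypergeomCoeff q α β (n + 1) =
      hypergeomCoeff q α β n * (1 - α * q ^ n) / ((1 - β * q ^ n) * (1 - q ^ (n + 1))) := by
  rw [hypergeomCoeff, hypergeomCoeff, qPochN_succ, qPochN_succ, qPochN_succ, ← pow_succ',
    mul_mul_mul_comm, mul_div_mul_comm, mul_div_assoc]

lemma summable_hypergeomCoeff_mul_pow {q α β u : ℂ} (hq : ‖q‖ < 1) (hu : ‖u‖ < 1) :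
    Summable fun n ↦ hypergeomCoeff q α β n * u ^ n := by
  have hw : ContinuousAt (fun z : ℂ ↦ u * (1 - α * z) / ((1 - β * z) * (1 - q * z))) 0 :=
    ContinuousAt.div (by fun_prop) (by fun_prop) (by simp)
  refine summable_of_succ_eq_smul
    (w := fun n ↦ u * (1 - α * q ^ n) / ((1 - β * q ^ n) * (1 - q * q ^ n))) (fun n ↦ ?_) ?_ hu
  · rw [hypergeomCoeff_succ, smul_eq_mul, pow_succ' q, pow_succ' u]
    ring
  · simpa [Function.comp_def] using
      hw.tendsto.comp (tendsto_pow_atTop_nhds_zero_of_norm_lt_one hq)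

theorem hypergeom_q_difference {q α β u : ℂ} (hq : ‖q‖ < 1) (hβ : ∀ n : ℕ, β * q ^ n ≠ 1)
    (hu : ‖u‖ < 1) :
    q * (u - 1) * hypergeom q α β u + (q + β - α * q * u) * hypergeom q α β (q * u)
      - β * hypergeom q α β (q ^ 2 * u) = 0 := by
  have hc (n : ℕ) : hypergeomCoeff q α β (n + 1) * ((1 - β * q ^ n) * (1 - q ^ (n + 1))) =
      hypergeomCoeff q α β n * (1 - α * q ^ n) := by
    have hqn : ‖q ^ (n + 1)‖ < 1 := by
      rw [norm_pow]; exact pow_lt_one₀ (norm_nonneg q) hq n.succ_ne_zero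
    have hqn' : q ^ (n + 1) ≠ 1 := fun h ↦ by simp [h] at hqn
    rw [hypergeomCoeff_succ, div_mul_cancel₀ _
      (mul_ne_zero (sub_ne_zero.2 (hβ n).symm) (sub_ne_zero.2 hqn'.symm))]
  set c := hypergeomCoeff q α β
  have hsum {v : ℂ} (hv : ‖v‖ ≤ 1) : HasSum (fun n ↦ c n * (v * u) ^ n) (hypergeom q α β (v * u)) :=
    (summable_hypergeomCoeff_mul_pow hq ((norm_mul_le _ _).trans_lt
      (by nlinarith [norm_nonneg v, norm_nonneg u]))).hasSum
  have h0 := hsum (v := 1) (by simp)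
  have h1 := hsum hq.le
  have h2 := hsum (v := q ^ 2) (by rw [norm_pow]; exact pow_le_one₀ (norm_nonneg q) hq.le)
  simp only [one_mul] at h0
  set A : ℕ → ℂ := fun n ↦ c n * u ^ n - α * (c n * (q * u) ^ n)
  set B : ℕ → ℂ := fun n ↦
    -q * (c n * u ^ n) + (q + β) * (c n * (q * u) ^ n) - β * (c n * (q ^ 2 * u) ^ n)
  -- `B n = -q c n u ^ n (1 - q ^ n) (1 - β q ^ (n - 1))`, which vanishes at `n = 0`
  have hBA (n : ℕ) : B (n + 1) = -(q * u) * A n := by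
    simp only [A, B, mul_pow, ← pow_mul]
    linear_combination (-q * u ^ (n + 1)) * hc n
  have hB := ((h0.mul_left (-q)).add (h1.mul_left (q + β))).sub (h2.mul_left β)
  rw [← hasSum_nat_add_iff' 1] at hB
  simp only [Finset.range_one, Finset.sum_singleton] at hB
  linear_combination hB.unique ((h0.sub (h1.mul_left α)).mul_left (-(q * u)) |>.congr_fun hBA)

lemma vSol_eq_hypergeom (q a₁ a₂ b₁ x : ℂ) :
    vSol q a₁ a₂ b₁ x = theta q (a₁ * x) / theta q x *
      hypergeom q (q * a₁ / b₁) (q * a₁ / a₂) (b₁ / (a₁ * a₂ * x)) := by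
  simp only [vSol, hypergeom, hypergeomCoeff, div_mul_eq_mul_div]

/-- `v₁` is an actual solution of the q-difference equation near infinity. -/
theorem v1_solution_at_infinity (q a₁ a₂ b₁ : ℂ)
    (hq0 : 0 < ‖q‖) (hq1 : ‖q‖ < 1)
    (ha₁ : a₁ ≠ 0) (ha₂ : a₂ ≠ 0) (hb₁ : b₁ ≠ 0)
    (haa : ∀ m : ℕ, q * a₁ / a₂ ≠ q ^ (-(m : ℤ))) :
    ∀ x : ℂ, ‖b₁ / (a₁ * a₂ * q ^ 2)‖ < ‖x‖ → (∀ k : ℤ, x ≠ -q ^ k) →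
      (b₁ / q ^ 2 - a₁ * a₂ * x) * vSol q a₁ a₂ b₁ (q ^ 2 * x)
        - (1 / q - (a₁ + a₂) * x) * vSol q a₁ a₂ b₁ (q * x)
        - x * vSol q a₁ a₂ b₁ x = 0 := by
  intro x hx _
  have hq : q ≠ 0 := norm_pos_iff.1 hq0
  have hx0 : x ≠ 0 := norm_pos_iff.1 ((norm_nonneg _).trans_lt hx)
  set u := b₁ / (a₁ * a₂ * q ^ 2 * x)
  have hu : ‖u‖ < 1 := by
    rwa [show u = b₁ / (a₁ * a₂ * q ^ 2) / x from (div_div _ _ _).symm, norm_div,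
      div_lt_one (norm_pos_iff.2 hx0)]
  have hβ (n : ℕ) : q * a₁ / a₂ * q ^ n ≠ 1 := fun h ↦
    haa n (by rw [zpow_neg, zpow_natCast]; exact eq_inv_of_mul_eq_one_left h)
  have key := hypergeom_q_difference (α := q * a₁ / b₁) hq1 hβ hu
  have hR1 := theta_ratio_q_mul hq ha₁ hx0
  have hR2 := theta_ratio_q_mul hq ha₁ (mul_ne_zero hq hx0)
  rw [hR1, ← mul_assoc q q x, ← sq] at hR2
  rw [vSol_eq_hypergeom, vSol_eq_hypergeom, vSol_eq_hypergeom, hR1, hR2,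
    show b₁ / (a₁ * a₂ * (q ^ 2 * x)) = u by simp only [u]; ring_nf,
    show b₁ / (a₁ * a₂ * (q * x)) = q * u by simp only [u]; field_simp,
    show b₁ / (a₁ * a₂ * x) = q ^ 2 * u by simp only [u]; field_simp]
  generalize theta q (a₁ * x) / theta q x = R
  linear_combination (norm := skip) (R * a₂ * x / (a₁ * q)) * key
  simp only [u]
  field_simp
  ring
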